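/- For r = 2: define χ(n; d_1, d_2; t) := C((1-t)c_1 - 1 + d_1 + d_2, n+2) - C((1-t)c_1 - 1 + d_2, n+2) - C((1-t)c_1 - 1 + d_1, n+2) + C((1-t)c_1 - 1, n+2), where c_1 = n + 3 - d_1 - d_2. Suppose c_1 < 0, d_1 ≥ d_2 ≥ 2, 1/2 ≤ t ≤ 1 with t·c_1 ∈ ℤ. Then χ(n; d_1, d_2; t) ≥ χ(n; d_1 + 1, d_2 - 1; t). -/

import Mathlib

/-!
Since `t·c₁ ∈ ℤ`, the common base `x = (1 - t)c₁ - 1` is an integer, and Pascal's rule turns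
`χ(n; d₁, d₂; t) - χ(n; d₁ + 1, d₂ - 1; t)` into `C(x + d₁, n + 1) - C(x + d₂ - 1, n + 1)`.
For integers `b ≤ a` with `a + b ≥ k - 1` one has `C(b, k) ≤ C(a, k)`: for `b ≥ 0` this is
monotonicity of `Nat.choose`, and for `b < 0` upper negation gives `|C(b, k)| = C(k - 1 - b, k)`
with `0 ≤ k - 1 - b ≤ a`. Here `a + b = n + c₁ - 2tc₁ ≥ n` because `t ≥ 1/2` and `c₁ < 0`.
-/

open Finset

/-- Generalized binomial coefficient `C(a, k) = a(a-1)⋯(a-k+1)/k!`. -/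
def gbc (a : ℚ) (k : ℕ) : ℚ :=
  (∏ i ∈ Finset.range k, (a - i)) / (Nat.factorial k)

theorem gbc_eq_choose (a : ℚ) (k : ℕ) : gbc a k = Ring.choose a k := by
  rw [Ring.choose_eq_smul, ← Polynomial.aeval_eq_smeval, Polynomial.aeval_def,
    ← Polynomial.eval_map, descPochhammer_map, descPochhammer_eval_eq_prod_range, gbc,
    smul_eq_mul, div_eq_inv_mul]

theorem gbc_intCast (z : ℤ) (k : ℕ) : gbc z k = ((Ring.choose z k : ℤ) : ℚ) := by
  rw [gbc_eq_choose, ← eq_intCast (Int.castRingHom ℚ)]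
  exact (Ring.map_choose _ z k).symm

namespace Int

theorem choose_nonneg {z : ℤ} (hz : 0 ≤ z) (k : ℕ) : 0 ≤ Ring.choose z k := by
  lift z to ℕ using hz
  rw [Ring.choose_natCast]
  positivity

theorem choose_le_choose {x y : ℤ} (hx : 0 ≤ x) (hxy : x ≤ y) (k : ℕ) :
    Ring.choose x k ≤ Ring.choose y k := by
  lift y to ℕ using hx.trans hxy
  lift x to ℕ using hx
  rw [Ring.choose_natCast, Ring.choose_natCast]
  exact_mod_cast Nat.choose_le_choose k (by omega)

theorem choose_le_choose_reflect {z : ℤ} {k : ℕ} (hz : z < k) :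
    Ring.choose z k ≤ Ring.choose (k - 1 - z) k := by
  have hsym := Ring.choose_neg (-z) k
  rw [neg_neg, show -z + k - 1 = k - 1 - z by ring] at hsym
  have hnonneg := choose_nonneg (show 0 ≤ (k : ℤ) - 1 - z by omega) k
  rw [hsym]
  rcases Int.units_eq_one_or (Int.negOnePow k) with h | h <;> rw [h] <;> simp
  omega

theorem choose_le_choose_of_le_add {a b : ℤ} {k : ℕ} (hba : b ≤ a) (hk : k ≤ a + b + 1) :
    Ring.choose b k ≤ Ring.choose a k := by
  rcases le_or_gt 0 b with hb | hb
  · exact choose_le_choose hb hba k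
  · calc Ring.choose b k ≤ Ring.choose (k - 1 - b) k := choose_le_choose_reflect (by omega)
      _ ≤ Ring.choose a k := choose_le_choose (by omega) (by omega) k

theorem choose_add_choose_le {a b : ℤ} {k : ℕ} (hba : b ≤ a) (hk : k ≤ a + b + 1) :
    Ring.choose a k + Ring.choose b k ≤ Ring.choose (a + 1) k + Ring.choose (b - 1) k := by
  cases k with
  | zero => simp
  | succ j =>
    have hb : Ring.choose b (j + 1) = Ring.choose (b - 1) j + Ring.choose (b - 1) (j + 1) := by
      rw [← Ring.choose_succ_succ, sub_add_cancel]
    have hmono : Ring.choose (b - 1) j ≤ Ring.choose a j :=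
      choose_le_choose_of_le_add (by omega) (by omega)
    rw [Ring.choose_succ_succ, hb]
    omega

end Int

theorem chi_two_degrees_monotone_general (n : ℕ) (d1 d2 : ℤ) (hdd : d2 ≤ d1)
    (hc : (n : ℤ) + 3 - d1 - d2 < 0) (t : ℚ) (ht1 : 1 / 2 ≤ t)
    (hint : ∃ m : ℤ, t * ((n : ℚ) + 3 - d1 - d2) = m) :
    gbc ((1 - t) * ((n : ℚ) + 3 - d1 - d2) - 1 + (d1 + 1) + (d2 - 1)) (n + 2) -
          gbc ((1 - t) * ((n : ℚ) + 3 - d1 - d2) - 1 + (d2 - 1)) (n + 2) -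
          gbc ((1 - t) * ((n : ℚ) + 3 - d1 - d2) - 1 + (d1 + 1)) (n + 2) +
          gbc ((1 - t) * ((n : ℚ) + 3 - d1 - d2) - 1) (n + 2) ≤
      gbc ((1 - t) * ((n : ℚ) + 3 - d1 - d2) - 1 + d1 + d2) (n + 2) -
          gbc ((1 - t) * ((n : ℚ) + 3 - d1 - d2) - 1 + d2) (n + 2) -
          gbc ((1 - t) * ((n : ℚ) + 3 - d1 - d2) - 1 + d1) (n + 2) +
          gbc ((1 - t) * ((n : ℚ) + 3 - d1 - d2) - 1) (n + 2) := by
  obtain ⟨m, hm⟩ := hint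
  set x : ℤ := n + 3 - d1 - d2 - m - 1
  have hx : (1 - t) * ((n : ℚ) + 3 - d1 - d2) - 1 = x := by push_cast [x]; linarith
  have htwo_m : 2 * m ≤ n + 3 - d1 - d2 := by
    have hcq : ((n : ℚ) + 3 - d1 - d2) < 0 := by exact_mod_cast hc
    have : (2 * m : ℚ) ≤ n + 3 - d1 - d2 := by nlinarith
    exact_mod_cast this
  have hexchange := Int.choose_add_choose_le (a := x + d1) (b := x + d2) (k := n + 2)
    (by omega) (by omega)
  have hexchangeQ : gbc (x + d1 : ℤ) (n + 2) + gbc (x + d2 : ℤ) (n + 2) ≤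
      gbc (x + d1 + 1 : ℤ) (n + 2) + gbc (x + d2 - 1 : ℤ) (n + 2) := by
    simp only [gbc_intCast]
    exact_mod_cast hexchange
  push_cast at hexchangeQ
  rw [hx, show (x : ℚ) + (d1 + 1) + (d2 - 1) = x + d1 + d2 by ring,
    ← add_assoc, ← add_sub_assoc]
  linarith

theorem chi_two_degrees_monotone (n : ℕ) (d1 d2 : ℤ) (hd : 2 ≤ d2) (hdd : d2 ≤ d1)
    (hc : (n : ℤ) + 3 - d1 - d2 < 0) (t : ℚ) (ht1 : 1 / 2 ≤ t) (ht2 : t ≤ 1)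
    (hint : ∃ m : ℤ, t * ((n : ℚ) + 3 - d1 - d2) = m) :
    gbc ((1 - t) * ((n : ℚ) + 3 - d1 - d2) - 1 + (d1 + 1) + (d2 - 1)) (n + 2) -
          gbc ((1 - t) * ((n : ℚ) + 3 - d1 - d2) - 1 + (d2 - 1)) (n + 2) -
          gbc ((1 - t) * ((n : ℚ) + 3 - d1 - d2) - 1 + (d1 + 1)) (n + 2) +
          gbc ((1 - t) * ((n : ℚ) + 3 - d1 - d2) - 1) (n + 2) ≤
      gbc ((1 - t) * ((n : ℚ) + 3 - d1 - d2) - 1 + d1 + d2) (n + 2) -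
          gbc ((1 - t) * ((n : ℚ) + 3 - d1 - d2) - 1 + d2) (n + 2) -
          gbc ((1 - t) * ((n : ℚ) + 3 - d1 - d2) - 1 + d1) (n + 2) +
          gbc ((1 - t) * ((n : ℚ) + 3 - d1 - d2) - 1) (n + 2) :=
  chi_two_degrees_monotone_general n d1 d2 hdd hc t ht1 hint
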